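/- Let D : W → W0 be the group homomorphism determined by D(v·τ(μ)) = v for v ∈ W0 and μ ∈ Q∨. Then for every y ∈ E, 𝔰_y = (D w_y)·𝔰_{c_y} in T_Λ. -/

import Mathlib

/-!
Write `y = w_y c_y` and let `v = D w_y`. For `α ∈ Φ0⁺` put `β = ±v⁻¹α ∈ Φ0⁺`. Then
`α(y) = ±β(c_y) + m` with `m ∈ ℤ`, so `α(y)` and `β(c_y)` are integral together, and then `w_y`
sends the affine root `(-β, β(c_y))`, which vanishes at `c_y`, to `±(-α, α(y))`. Minimality of
`w_y` forces it to keep positive every positive affine root `a` vanishing at `c_y`: otherwise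
`a ∈ Π(w_y)`, and `w_y s_a` would be a shorter element sending `c_y` to `y`. Hence
`η(α(y)) = ±η(β(c_y))`, and since `k_α = k_β` and `α(λ) = ±β(v⁻¹λ)`, the factors of `𝔰_y(λ)` and
`𝔰_{c_y}(v⁻¹λ)` match under `α ↦ β`.

That `c_y` exists at all comes from minimising the distance to a point of `C₊` over the orbit,
whose intersection with any ball is finite.
-/

open scoped InnerProductSpace Classical

noncomputable section

namespace SSV

variable {E : Type*} [NormedAddCommGroup E] [InnerProductSpace ℝ E]

/-- The coroot `α∨ = (2/‖α‖²)·α` of `α ∈ E`, under the identification of `E*` with `E`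
via the inner product (a root `α` acts on `E` as the linear functional `y ↦ ⟪α,y⟫`). -/
def cv (α : E) : E := (2 / ⟪α, α⟫_ℝ) • α

/-- The linear functional `y ↦ ⟪α∨, y⟫ = 2⟪α,y⟫/‖α‖²`. -/
def rootForm (α : E) : E →ₗ[ℝ] ℝ where
  toFun y := 2 / ⟪α, α⟫_ℝ * ⟪α, y⟫_ℝ
  map_add' y z := by rw [inner_add_right]; ring
  map_smul' c y := by
    simp only [RingHom.id_apply, smul_eq_mul, real_inner_smul_right]
    ring

/-- The orthogonal reflection `s_α : y ↦ y − α(y)·α∨` in the hyperplane `α = 0`. -/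
def lrefl (α : E) : E ≃ₗ[ℝ] E :=
  if h : ⟪α, α⟫_ℝ = 0 then LinearEquiv.refl ℝ E
  else
    Module.reflection (f := rootForm α) (x := α)
      (by simp only [rootForm, LinearMap.coe_mk, AddHom.coe_mk]; field_simp)

/-- The affine reflection `s_a : y ↦ y − a(y)·α∨` associated to the affine root
`a = (α, c)`, i.e. to the affine function `y ↦ α(y) + c = ⟪α,y⟫ + c` on `E`. -/
def aRefl (α : E) (c : ℝ) : E ≃ᵃ[ℝ] E :=
  (lrefl α).toAffineEquiv.trans (AffineEquiv.constVAdd ℝ E (-(c • cv α)))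

/-- The translation `τ(μ) : y ↦ y + μ`. -/
def tr (μ : E) : E ≃ᵃ[ℝ] E := AffineEquiv.constVAdd ℝ E μ

/-- `η = χ_{ℤ_{>0}} − χ_{ℤ_{≤0}} : ℝ → {−1,0,1}`. -/
def eta (x : ℝ) : ℤ :=
  if ∃ n : ℤ, x = (n : ℝ) then (if 0 < x then 1 else -1) else 0

/-- `sgn(ℓ) = ℓ/|ℓ|` for `ℓ ≠ 0`, and `sgn(0) = 1`. -/
def sgnz (l : ℤ) : ℤ := if 0 ≤ l then 1 else -1

/-- The alternating word `j j' j j' ⋯` of length `m`. -/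
def altList {n : ℕ} (j j' : Fin n) (m : ℕ) : List (Fin n) :=
  (List.range m).map fun s => if s % 2 = 0 then j else j'

/-- Evaluation of the affine function `a = (α, c)` at `y`: `a(y) = α(y) + c`. -/
def aval (a : E × ℝ) (y : E) : ℝ := ⟪a.1, y⟫_ℝ + a.2

/-- The contragredient action of `w` on affine roots: `(w·a)(y) = a(w⁻¹·y)`. -/
def wact (w : E ≃ᵃ[ℝ] E) (a : E × ℝ) : E × ℝ :=
  (w.linear a.1, a.2 - ⟪w.linear a.1, w 0⟫_ℝ)

/-- The relation `y ≺_α z`. -/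
def precA (α : E) (y z : E) : Prop :=
  (∃ l : ℤ, y = aRefl α (l : ℝ) z) ∧
    (|⟪α, y⟫_ℝ| < |⟪α, z⟫_ℝ| ∨ (⟪α, y⟫_ℝ = -⟪α, z⟫_ℝ ∧ 0 < ⟪α, y⟫_ℝ))

/-- The data of a reduced irreducible finite root system `Φ0` realised in `E* ≅ E`,
normalised so that long roots have squared length `2/m²`, together with a choice of
positive roots, simple roots `α_1, …, α_r`, and the corresponding highest root `φ`. -/
structure Data (E : Type*) [NormedAddCommGroup E] [InnerProductSpace ℝ E] where
  r : ℕ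
  r_pos : 0 < r
  m : ℕ
  m_pos : 0 < m
  Φ0 : Finset E
  pos : Finset E
  simple : Fin r → E
  hroot : E
  root_ne_zero : ∀ α ∈ Φ0, α ≠ 0
  root_neg_mem : ∀ α ∈ Φ0, -α ∈ Φ0
  root_reduced : ∀ α ∈ Φ0, ∀ c : ℝ, c • α ∈ Φ0 → c = 1 ∨ c = -1
  root_refl_mem : ∀ α ∈ Φ0, ∀ β ∈ Φ0, aRefl α 0 β ∈ Φ0
  root_crystal : ∀ α ∈ Φ0, ∀ β ∈ Φ0, ∃ n : ℤ, ⟪cv β, α⟫_ℝ = (n : ℝ)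
  root_irred : ∀ A B : Set E, (Φ0 : Set E) = A ∪ B → A.Nonempty → B.Nonempty →
    (∀ a ∈ A, ∀ b ∈ B, ⟪a, b⟫_ℝ = 0) → False
  root_norm_le : ∀ α ∈ Φ0, ⟪α, α⟫_ℝ ≤ 2 / (m : ℝ) ^ 2
  root_norm_int : ∀ α ∈ Φ0, ∃ n : ℤ, (n : ℝ) * ⟪α, α⟫_ℝ = 2
  pos_subset : pos ⊆ Φ0
  pos_dichotomy : ∀ α ∈ Φ0, (α ∈ pos ∧ -α ∉ pos) ∨ (α ∉ pos ∧ -α ∈ pos)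
  simple_mem_pos : ∀ i, simple i ∈ pos
  simple_indep : LinearIndependent ℝ simple
  pos_nat_comb : ∀ α ∈ pos, ∃ n : Fin r → ℕ, α = ∑ i, (n i : ℝ) • simple i
  hroot_mem_pos : hroot ∈ pos
  hroot_long : ⟪hroot, hroot⟫_ℝ = 2 / (m : ℝ) ^ 2
  hroot_highest : ∀ α ∈ Φ0, ∃ n : Fin r → ℕ, hroot - α = ∑ i, (n i : ℝ) • simple i

namespace Data

variable (D : Data E)

/-- The coroot lattice `Q∨`. -/
def Qv : AddSubgroup E := AddSubgroup.closure (cv '' (D.Φ0 : Set E))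

/-- The simple affine roots `α_0 = (−φ, 1)` and `α_i = (α_i, 0)` (`1 ≤ i ≤ r`), as pairs
`(gradient, constant term)`. -/
def asimple : Fin (D.r + 1) → E × ℝ :=
  Fin.cases (-D.hroot, (1 : ℝ)) fun i => (D.simple i, (0 : ℝ))

/-- The simple reflections `s_0, …, s_r` of the affine Weyl group. -/
def sgen (j : Fin (D.r + 1)) : E ≃ᵃ[ℝ] E := aRefl (D.asimple j).1 (D.asimple j).2

/-- `a = (α, c)` is an affine root iff `α ∈ Φ0` and `c ∈ ℤ`. -/
def IsAffRoot (a : E × ℝ) : Prop := a.1 ∈ D.Φ0 ∧ ∃ n : ℤ, a.2 = (n : ℝ)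

/-- `a` is a positive affine root. -/
def IsPosAff (a : E × ℝ) : Prop :=
  D.IsAffRoot a ∧ (0 < a.2 ∨ (a.2 = 0 ∧ a.1 ∈ D.pos))

/-- The set of reflections `s_α`, `α ∈ Φ0`. -/
def reflSet : Set (E ≃ᵃ[ℝ] E) := {g | ∃ α ∈ D.Φ0, g = aRefl α 0}

/-- The set of translations `τ(μ)`, `μ ∈ Q∨`. -/
def trSet : Set (E ≃ᵃ[ℝ] E) := {g | ∃ μ ∈ D.Qv, g = tr μ}

/-- The finite Weyl group `W0`, generated by the reflections `s_α`. -/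
def W0 : Subgroup (E ≃ᵃ[ℝ] E) := Subgroup.closure D.reflSet

/-- The affine Weyl group `W = W0 ⋉ Q∨`. -/
def W : Subgroup (E ≃ᵃ[ℝ] E) := Subgroup.closure (D.reflSet ∪ D.trSet)

/-- The inversion set `Π(w) = Φ+ ∩ w⁻¹Φ−`. -/
def PiSet (w : E ≃ᵃ[ℝ] E) : Set (E × ℝ) :=
  {a | D.IsPosAff a ∧ ¬D.IsPosAff (wact w a)}

/-- The length function `ℓ(w) := #Π(w)`. -/
def len (w : E ≃ᵃ[ℝ] E) : ℕ := (D.PiSet w).ncard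

/-- The open fundamental alcove `C₊`. -/
def Cp : Set E := {y | ∀ α ∈ D.pos, 0 < ⟪α, y⟫_ℝ ∧ ⟪α, y⟫_ℝ < 1}

/-- The closed fundamental alcove `C̄₊`. -/
def Cbar : Set E := closure D.Cp

/-- The face `C^J` of `C̄₊` (for `J ⊊ {0,…,r}`). -/
def CJ (J : Set (Fin (D.r + 1))) : Set E :=
  {c | c ∈ D.Cbar ∧ ∀ j, aval (D.asimple j) c = 0 ↔ j ∈ J}

/-- The orbit `O_c = W·c`. -/
def Orb (c : E) : Set E := {y | ∃ w ∈ D.W, w c = y}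

/-- The unique point `c_y ∈ C̄₊` in the `W`-orbit of `y`. -/
def cpt (y : E) : E :=
  if h : ∃ c, c ∈ D.Cbar ∧ ∃ w ∈ D.W, w c = y then h.choose else 0

/-- The unique shortest element `w_y ∈ W` with `w_y · c_y = y`. -/
def wmin (y : E) : E ≃ᵃ[ℝ] E :=
  if h : ∃ w, (w ∈ D.W ∧ w (D.cpt y) = y) ∧
      ∀ u, u ∈ D.W → u (D.cpt y) = y → D.len w ≤ D.len u then
    h.choose
  else 1

/-- Reflections of the Coxeter system `(W, {s_0, …, s_r})`. -/
def IsCoxRefl (g : E ≃ᵃ[ℝ] E) : Prop := ∃ w ∈ D.W, ∃ j, g = w * D.sgen j * w⁻¹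

/-- A single step in the Bruhat order. -/
def bstep (u v : E ≃ᵃ[ℝ] E) : Prop :=
  (∃ g, D.IsCoxRefl g ∧ v = g * u) ∧ D.len u < D.len v

/-- The Bruhat order `≤_B` of `(W, {s_0, …, s_r})`. -/
def bruhatLE : (E ≃ᵃ[ℝ] E) → (E ≃ᵃ[ℝ] E) → Prop := Relation.ReflTransGen D.bstep

/-- The strict Bruhat order `<_B`. -/
def bruhatLT (u v : E ≃ᵃ[ℝ] E) : Prop := D.bruhatLE u v ∧ u ≠ v

/-- The parabolic Bruhat order `≤` on `E`: `y ≤ z` iff `y ∈ W·z` and `w_y ≤_B w_z`. -/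
def paraLE (y z : E) : Prop :=
  (∃ w ∈ D.W, w z = y) ∧ D.bruhatLE (D.wmin y) (D.wmin z)

/-- The strict parabolic Bruhat order `<` on `E`. -/
def paraLT (y z : E) : Prop := D.paraLE y z ∧ y ≠ z

/-- The relation `≺`, the transitive closure of the `≺_α` (`α ∈ Φ0+`). -/
def prec : E → E → Prop :=
  Relation.TransGen fun y z => ∃ α ∈ D.pos, precA α y z

/-- The relation `⪯`. -/
def precLE (y z : E) : Prop := D.prec y z ∨ y = z

/-- The parabolic subgroup `W_J` of `W`. -/
def WJ (J : Set (Fin (D.r + 1))) : Subgroup (E ≃ᵃ[ℝ] E) :=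
  Subgroup.closure {g | ∃ j ∈ J, g = D.sgen j}

/-- The set `W^J` of minimal-length representatives of the cosets `W/W_J`. -/
def WminJ (J : Set (Fin (D.r + 1))) : Set (E ≃ᵃ[ℝ] E) :=
  {w | w ∈ D.W ∧ ∀ u ∈ D.WJ J, D.len w ≤ D.len (w * u)}

/-- Dominant elements: `α(μ) ≥ 0` for all `α ∈ Φ0+`. -/
def IsDom (μ : E) : Prop := ∀ α ∈ D.pos, 0 ≤ ⟪α, μ⟫_ℝ

/-- `Π0(v) = Φ0+ ∩ v⁻¹Φ0−` for `v ∈ W0`. -/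
def Pi0 (v : E ≃ᵃ[ℝ] E) : Finset E := D.pos.filter fun α => -(v.linear α) ∈ D.pos

/-- `χ = χ₊ − χ₋ : Φ0 → {±1}`. -/
def chi (α : E) : ℤ := if α ∈ D.pos then 1 else -1

end Data

/-- The character `𝔰_y : μ ↦ ∏_{α ∈ Φ0+} k_α^{η(α(y))·α(μ)}` (evaluated at points `μ` where
all `α(μ)` are integers, e.g. on a lattice `Λ ∈ 𝓛`). -/
def sweight {F : Type*} [Field F] (D : Data E) (k : E → Fˣ) (y μ : E) : Fˣ :=
  ∏ α ∈ D.pos, k α ^ (eta ⟪α, y⟫_ℝ * ⌊⟪α, μ⟫_ℝ⌋)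

/-- The action of `w ∈ W` on characters of `Q∨`: for `w = τ(ν)v`,
`(w·t)(μ) = q^{⟪ν,μ⟫}·t(v⁻¹μ)`. -/
def charAct {F : Type*} [Field F] (q : Fˣ) (w : E ≃ᵃ[ℝ] E) (t : E → Fˣ) : E → Fˣ :=
  fun μ => q ^ ⌊⟪w 0, μ⟫_ℝ⌋ * t (w.linear.symm μ)

/-- `t` defines a multiplicative character of `Q∨`, i.e. an element of `T = Hom(Q∨, Fˣ)`. -/
def IsChar {F : Type*} [Field F] (D : Data E) (t : E → Fˣ) : Prop :=
  ∀ μ ∈ D.Qv, ∀ ν ∈ D.Qv, t (μ + ν) = t μ * t ν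

/-- `q_α := q^{2/‖α‖²}`. -/
def qroot {F : Type*} [Field F] (q : Fˣ) (α : E) : Fˣ := q ^ ⌊2 / ⟪α, α⟫_ℝ⌋

/-- Membership in `T_J`: `t ∈ T` with `t^{α_i∨} = 1` for `i ∈ J ∩ {1,…,r}`, and
`q_φ·t^{−φ∨} = 1` if `0 ∈ J`. -/
def InTJ {F : Type*} [Field F] (D : Data E) (q : Fˣ) (J : Set (Fin (D.r + 1)))
    (t : E → Fˣ) : Prop :=
  IsChar D t ∧ (∀ i : Fin D.r, i.succ ∈ J → t (cv (D.simple i)) = 1) ∧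
    ((0 : Fin (D.r + 1)) ∈ J → qroot q D.hroot * t (-cv D.hroot) = 1)

/-- `κ_v(y) = ∏_{α ∈ Π0(v)} k_α^{−η(α(y))}`. -/
def kappa {F : Type*} [Field F] (D : Data E) (k : E → Fˣ) (v : E ≃ᵃ[ℝ] E) (y : E) : Fˣ :=
  ∏ α ∈ D.Pi0 v, k α ^ (-eta ⟪α, y⟫_ℝ)

/-- The (quasi-)monomial `x^y`, as an element of `⊕_{z ∈ E} F x^z`. -/
def xmono (F : Type*) [Field F] (y : E) : E →₀ F := Finsupp.single y 1

/-- The multiplication operator `π(x^μ) : x^y ↦ x^{y+μ}`. -/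
def xop (F : Type*) [Field F] (μ : E) : Module.End F (E →₀ F) :=
  Finsupp.lmapDomain F F (· + μ)

/-- The truncated divided difference `∇_i(x^y)` in its explicit form: with `n = ⌊α(y)⌋`,
`−(x^{y−α∨} + ⋯ + x^{y−nα∨})` if `n ≥ 1`, `0` if `n = 0`, and
`x^y + x^{y+α∨} + ⋯ + x^{y+(−n−1)α∨}` if `n ≤ −1`. -/
def nablaS (F : Type*) [Field F] (α y : E) : E →₀ F :=
  if 1 ≤ ⌊⟪α, y⟫_ℝ⌋ then
    -∑ s ∈ Finset.Icc (1 : ℤ) ⌊⟪α, y⟫_ℝ⌋, Finsupp.single (y - (s : ℝ) • cv α) (1 : F)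
  else
    ∑ s ∈ Finset.Icc (0 : ℤ) (-⌊⟪α, y⟫_ℝ⌋ - 1), Finsupp.single (y + (s : ℝ) • cv α) (1 : F)

/-- The truncated divided difference `∇_0(x^y)` in its explicit form: with `n = ⌊−φ(y)⌋`,
`−(q_φ^{−1}x^{y+φ∨} + ⋯ + q_φ^{−n}x^{y+nφ∨})` if `n ≥ 1`, `0` if `n = 0`, and
`x^y + q_φ x^{y−φ∨} + ⋯ + q_φ^{−n−1}x^{y+(n+1)φ∨}` if `n ≤ −1`. -/
def nabla0 {F : Type*} [Field F] (D : Data E) (q : Fˣ) (y : E) : E →₀ F :=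
  if 1 ≤ ⌊-⟪D.hroot, y⟫_ℝ⌋ then
    -∑ s ∈ Finset.Icc (1 : ℤ) ⌊-⟪D.hroot, y⟫_ℝ⌋,
      (((qroot q D.hroot : Fˣ) : F) ^ (-s)) • Finsupp.single (y + (s : ℝ) • cv D.hroot) (1 : F)
  else
    ∑ s ∈ Finset.Icc (0 : ℤ) (-⌊-⟪D.hroot, y⟫_ℝ⌋ - 1),
      (((qroot q D.hroot : Fˣ) : F) ^ s) • Finsupp.single (y - (s : ℝ) • cv D.hroot) (1 : F)

/-- `k_j := k_{α_j}` (`0 ≤ j ≤ r`), with `k_0 = k_φ`. -/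
def kgen {F : Type*} [Field F] (D : Data E) (k : E → Fˣ) : Fin (D.r + 1) → Fˣ :=
  Fin.cases (k D.hroot) fun i => k (D.simple i)

/-- The image of the monomial `x^y` under the truncated Demazure–Lusztig operator `π(T_j)`:
`π(T_i)x^y = k_i^{χ_ℤ(α_i(y))}x^{s_i y} + (k_i − k_i^{−1})∇_i(x^y)` for `1 ≤ i ≤ r`, and
`π(T_0)x^y = k_0^{χ_ℤ(α_0(y))}𝔱_y^{φ∨}x^{s_φ y} + (k_0 − k_0^{−1})∇_0(x^y)`. -/
def Tfun {F : Type*} [Field F] (D : Data E) (q : Fˣ) (k t : E → Fˣ) :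
    Fin (D.r + 1) → E → E →₀ F :=
  Fin.cases
    (fun y =>
      ((if ∃ n : ℤ, aval (D.asimple 0) y = (n : ℝ) then ((k D.hroot : Fˣ) : F) else 1) *
          ((charAct q (D.wmin y) t (cv D.hroot) : Fˣ) : F)) •
          Finsupp.single (aRefl D.hroot 0 y) (1 : F) +
        (((k D.hroot : Fˣ) : F) - (((k D.hroot)⁻¹ : Fˣ) : F)) • nabla0 D q y)
    fun i y =>
      (if ∃ n : ℤ, ⟪D.simple i, y⟫_ℝ = (n : ℝ) then ((k (D.simple i) : Fˣ) : F) else 1) •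
          Finsupp.single (aRefl (D.simple i) 0 y) (1 : F) +
        (((k (D.simple i) : Fˣ) : F) - (((k (D.simple i))⁻¹ : Fˣ) : F)) • nablaS F (D.simple i) y

/-- The truncated Demazure–Lusztig operator `π(T_j)` on `⊕_{y ∈ E} F x^y`. -/
def Top {F : Type*} [Field F] (D : Data E) (q : Fˣ) (k t : E → Fˣ) (j : Fin (D.r + 1)) :
    Module.End F (E →₀ F) :=
  Finsupp.linearCombination F (Tfun D q k t j)

/-- `π(((1 − x^{−α(μ)α∨})/(1 − x^{α∨}))·x^μ)` applied to `x^y`: the finite geometric sum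
appearing in the cross relation for `T_i`. -/
def crossS (F : Type*) [Field F] (α μ y : E) : E →₀ F :=
  if 1 ≤ ⌊⟪α, μ⟫_ℝ⌋ then
    -∑ s ∈ Finset.Icc (1 : ℤ) ⌊⟪α, μ⟫_ℝ⌋, Finsupp.single (y + μ - (s : ℝ) • cv α) (1 : F)
  else
    ∑ s ∈ Finset.Icc (0 : ℤ) (-⌊⟪α, μ⟫_ℝ⌋ - 1), Finsupp.single (y + μ + (s : ℝ) • cv α) (1 : F)

/-- `π(((1 − (q_φ x^{−φ∨})^{φ(μ)})/(1 − q_φ x^{−φ∨}))·x^μ)` applied to `x^y`: the finite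
geometric sum appearing in the cross relation for `T_0`. -/
def cross0 {F : Type*} [Field F] (D : Data E) (q : Fˣ) (μ y : E) : E →₀ F :=
  if 0 ≤ ⌊⟪D.hroot, μ⟫_ℝ⌋ then
    ∑ s ∈ Finset.Icc (0 : ℤ) (⌊⟪D.hroot, μ⟫_ℝ⌋ - 1),
      (((qroot q D.hroot : Fˣ) : F) ^ s) • Finsupp.single (y + μ - (s : ℝ) • cv D.hroot) (1 : F)
  else
    -∑ s ∈ Finset.Icc (1 : ℤ) (-⌊⟪D.hroot, μ⟫_ℝ⌋),
      (((qroot q D.hroot : Fˣ) : F) ^ (-s)) • Finsupp.single (y + μ + (s : ℝ) • cv D.hroot) (1 : F)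

/-- The quasi-monomial `x^y` in the model `Q^{(c)} ⊆ (E → Q)` of `Q ⊗_P P^{(c)}`:
`x^y` is the function `z ↦ x^{y−z}` supported on `y + Q∨`. -/
def xiQ {Q : Type*} [Field Q] (D : Data E) (mono : E → Q) (y : E) : E → Q :=
  fun z => if z - y ∈ D.Qv then mono (y - z) else 0

/-- Membership in the model `Q^{(c)} ⊆ (E → Q)` of `Q ⊗_P P^{(c)}`: functions supported on
`O_c` satisfying the covariance `ξ(z + ν) = x^{−ν}·ξ(z)` (`ν ∈ Q∨`). -/
def IsQc {Q : Type*} [Field Q] (D : Data E) (mono : E → Q) (c : E) (ξ : E → Q) : Prop :=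
  (∀ z, z ∉ D.Orb c → ξ z = 0) ∧
    ∀ z ∈ D.Orb c, ∀ ν ∈ D.Qv, ξ (z + ν) = (mono ν)⁻¹ * ξ z

/-- `x^{α_0∨} = q_φ x^{−φ∨}` as an element of `Q`. -/
def xroot0 {F Q : Type*} [Field F] [Field Q] (D : Data E) (ι : F →+* Q) (q : Fˣ)
    (mono : E → Q) : Q :=
  ι ((qroot q D.hroot : Fˣ) : F) * mono (-cv D.hroot)

/-- The right-hand side of the defining formula for `σ(s_j)(x^y)`:
`(k_j^{χ_ℤ(α_j(y))}(x^{α_j∨} − 1)/(k_j x^{α_j∨} − k_j^{−1}))·s_{j,𝔱}x^y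
 + ((k_j − k_j^{−1})/(k_j x^{α_j∨} − k_j^{−1}))·x^{y − ⌊Dα_j(y)⌋α_j∨}`. -/
def sigmaFormula {F Q : Type*} [Field F] [Field Q] (D : Data E) (ι : F →+* Q) (q : Fˣ)
    (k t : E → Fˣ) (mono : E → Q) : Fin (D.r + 1) → E → E → Q :=
  Fin.cases
    (fun y =>
      (((if ∃ n : ℤ, aval (D.asimple 0) y = (n : ℝ) then ι ((k D.hroot : Fˣ) : F) else 1) *
            (xroot0 D ι q mono - 1)) /
          (ι ((k D.hroot : Fˣ) : F) * xroot0 D ι q mono - ι (((k D.hroot)⁻¹ : Fˣ) : F))) •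
          (ι ((charAct q (D.wmin y) t (cv D.hroot) : Fˣ) : F) •
            xiQ D mono (aRefl D.hroot 0 y)) +
        ((ι ((k D.hroot : Fˣ) : F) - ι (((k D.hroot)⁻¹ : Fˣ) : F)) /
          (ι ((k D.hroot : Fˣ) : F) * xroot0 D ι q mono - ι (((k D.hroot)⁻¹ : Fˣ) : F))) •
          (ι (((qroot q D.hroot ^ (-⌊-⟪D.hroot, y⟫_ℝ⌋) : Fˣ) : F)) •
            xiQ D mono (y + (⌊-⟪D.hroot, y⟫_ℝ⌋ : ℝ) • cv D.hroot)))
    fun i y =>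
      (((if ∃ n : ℤ, ⟪D.simple i, y⟫_ℝ = (n : ℝ) then ι ((k (D.simple i) : Fˣ) : F) else 1) *
            (mono (cv (D.simple i)) - 1)) /
          (ι ((k (D.simple i) : Fˣ) : F) * mono (cv (D.simple i)) -
            ι (((k (D.simple i))⁻¹ : Fˣ) : F))) •
          xiQ D mono (aRefl (D.simple i) 0 y) +
        ((ι ((k (D.simple i) : Fˣ) : F) - ι (((k (D.simple i))⁻¹ : Fˣ) : F)) /
          (ι ((k (D.simple i) : Fˣ) : F) * mono (cv (D.simple i)) -
            ι (((k (D.simple i))⁻¹ : Fˣ) : F))) •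
          xiQ D mono (y - (⌊⟪D.simple i, y⟫_ℝ⌋ : ℝ) • cv (D.simple i))

end SSV

namespace SSV

variable {E : Type*} [NormedAddCommGroup E] [InnerProductSpace ℝ E] {D : Data E}

section Reflections

lemma inner_cv_left (α x : E) : ⟪cv α, x⟫_ℝ = 2 / ⟪α, α⟫_ℝ * ⟪α, x⟫_ℝ :=
  real_inner_smul_left _ _ _

lemma inner_cv_self {α : E} (h : ⟪α, α⟫_ℝ ≠ 0) : ⟪cv α, α⟫_ℝ = 2 := by
  rw [inner_cv_left]
  field_simp

lemma lrefl_apply {α : E} (h : ⟪α, α⟫_ℝ ≠ 0) (x : E) : lrefl α x = x - ⟪cv α, x⟫_ℝ • α := by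
  rw [lrefl, dif_neg h, inner_cv_left]
  exact Module.reflection_apply x _

lemma inner_lrefl_lrefl {α : E} (h : ⟪α, α⟫_ℝ ≠ 0) (x z : E) :
    ⟪lrefl α x, lrefl α z⟫_ℝ = ⟪x, z⟫_ℝ := by
  simp only [lrefl_apply h, inner_cv_left, inner_sub_left, inner_sub_right, real_inner_smul_left,
    real_inner_smul_right, real_inner_comm x α]
  field_simp
  ring

lemma aRefl_linear_apply {α : E} (h : ⟪α, α⟫_ℝ ≠ 0) (c : ℝ) (x : E) :
    (aRefl α c).linear x = x - ⟪cv α, x⟫_ℝ • α :=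
  lrefl_apply h x

lemma aRefl_apply {α : E} (h : ⟪α, α⟫_ℝ ≠ 0) (c : ℝ) (x : E) :
    aRefl α c x = x - aval (α, c) x • cv α := by
  change -(c • cv α) + lrefl α x = _
  rw [lrefl_apply h, aval, inner_cv_left, cv, smul_smul]
  module

lemma aRefl_eq_tr_mul {α : E} (h : ⟪α, α⟫_ℝ ≠ 0) (c : ℝ) :
    aRefl α c = tr (-(c • cv α)) * aRefl α 0 := by
  ext x
  change aRefl α c x = -(c • cv α) + aRefl α 0 x
  simp only [aRefl_apply h, aval]
  module

lemma tr_apply (μ x : E) : tr μ x = x + μ :=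
  add_comm μ x

lemma apply_eq_linear_add (w : E ≃ᵃ[ℝ] E) (x : E) : w x = w.linear x + w 0 := by
  simpa using w.toAffineMap.map_vadd 0 x

lemma norm_aRefl_sub_sq {α : E} (h : ⟪α, α⟫_ℝ ≠ 0) (n : ℝ) (p z : E) :
    ‖aRefl α n p - z‖ ^ 2 = ‖p - z‖ ^ 2 + 4 / ⟪α, α⟫_ℝ * (aval (α, n) p * aval (α, n) z) := by
  rw [aRefl_apply h, show p - aval (α, n) p • cv α - z = (p - z) - aval (α, n) p • cv α by abel,
    ← real_inner_self_eq_norm_sq, ← real_inner_self_eq_norm_sq]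
  simp only [aval, cv, inner_sub_left, inner_sub_right, real_inner_smul_left,
    real_inner_smul_right, real_inner_comm p α, real_inner_comm z α]
  field_simp
  ring

end Reflections

section WeylGroup

lemma inner_self_ne_zero_of_mem {α : E} (hα : α ∈ D.Φ0) : ⟪α, α⟫_ℝ ≠ 0 :=
  inner_self_ne_zero.2 (D.root_ne_zero α hα)

lemma exists_inner_eq_intCast_of_mem_Qv {μ : E} (hμ : μ ∈ D.Qv) {α : E} (hα : α ∈ D.Φ0) :
    ∃ n : ℤ, ⟪α, μ⟫_ℝ = n := by
  induction hμ using AddSubgroup.closure_induction with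
  | mem x hx =>
    obtain ⟨β, hβ, rfl⟩ := hx
    obtain ⟨n, hn⟩ := D.root_crystal α hα β hβ
    exact ⟨n, by rw [real_inner_comm, hn]⟩
  | zero => exact ⟨0, by simp⟩
  | add x z _ _ hx hz =>
    obtain ⟨n, hn⟩ := hx
    obtain ⟨m, hm⟩ := hz
    exact ⟨n + m, by rw [inner_add_right, hn, hm]; push_cast; ring⟩
  | neg x _ hx =>
    obtain ⟨n, hn⟩ := hx
    exact ⟨-n, by rw [inner_neg_right, hn]; push_cast; ring⟩

lemma Qv_le_span : D.Qv ≤ (Submodule.span ℝ (D.Φ0 : Set E)).toAddSubgroup := by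
  refine (AddSubgroup.closure_le _).2 ?_
  rintro _ ⟨β, hβ, rfl⟩
  exact Submodule.smul_mem _ _ (Submodule.subset_span hβ)

lemma smul_cv_mem_Qv {α : E} (hα : α ∈ D.Φ0) (n : ℤ) : (n : ℝ) • cv α ∈ D.Qv := by
  rw [Int.cast_smul_eq_zsmul]
  exact zsmul_mem (AddSubgroup.subset_closure (Set.mem_image_of_mem cv hα)) n

lemma aRefl_mem_W {α : E} (hα : α ∈ D.Φ0) (n : ℤ) : aRefl α n ∈ D.W := by
  rw [aRefl_eq_tr_mul (inner_self_ne_zero_of_mem hα), ← neg_smul, ← Int.cast_neg]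
  exact mul_mem (Subgroup.subset_closure (Or.inr ⟨_, smul_cv_mem_Qv hα (-n), rfl⟩))
    (Subgroup.subset_closure (Or.inl ⟨α, hα, rfl⟩))

lemma Data.IsAffRoot.aRefl_mem_W {a : E × ℝ} (ha : D.IsAffRoot a) : aRefl a.1 a.2 ∈ D.W := by
  obtain ⟨hα, n, hn⟩ := ha
  rw [hn]
  exact SSV.aRefl_mem_W hα n

lemma apply_mem_Orb {w : E ≃ᵃ[ℝ] E} (hw : w ∈ D.W) {y p : E} (hp : p ∈ D.Orb y) :
    w p ∈ D.Orb y := by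
  obtain ⟨u, hu, rfl⟩ := hp
  exact ⟨w * u, mul_mem hw hu, rfl⟩

variable (D) in
/-- The properties of the elements of `W` used below; they hold for the generators and are stable
under products and inverses. -/
structure IsWeylLike (w : E ≃ᵃ[ℝ] E) : Prop where
  inner_linear : ∀ x z : E, ⟪w.linear x, w.linear z⟫_ℝ = ⟪x, z⟫_ℝ
  linear_mem : ∀ α ∈ D.Φ0, w.linear α ∈ D.Φ0
  inner_apply_zero : ∀ α ∈ D.Φ0, ∃ n : ℤ, ⟪α, w 0⟫_ℝ = n
  exists_W0 : ∃ u ∈ D.W0, u.linear = w.linear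
  apply_sub_mem_span : ∀ x : E, w x - x ∈ Submodule.span ℝ (D.Φ0 : Set E)

namespace IsWeylLike

variable {w u : E ≃ᵃ[ℝ] E}

lemma inner_linear_symm (hw : IsWeylLike D w) (x z : E) :
    ⟪x, w.linear.symm z⟫_ℝ = ⟪w.linear x, z⟫_ℝ := by
  rw [← hw.inner_linear, LinearEquiv.apply_symm_apply]

lemma inner_linear_apply (hw : IsWeylLike D w) (β x : E) :
    ⟪w.linear β, w x⟫_ℝ = ⟪β, x⟫_ℝ + ⟪w.linear β, w 0⟫_ℝ := by
  rw [apply_eq_linear_add w x, inner_add_right, hw.inner_linear]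

lemma exists_linear_eq (hw : IsWeylLike D w) {α : E} (hα : α ∈ D.Φ0) :
    ∃ β ∈ D.Φ0, w.linear β = α := by
  obtain ⟨β, hβ, h⟩ := Finset.surj_on_of_inj_on_of_card_le (fun β _ => w.linear β)
    hw.linear_mem (fun _ _ _ _ h => w.linear.injective h) le_rfl α hα
  exact ⟨β, hβ, h.symm⟩

lemma linear_symm_mem (hw : IsWeylLike D w) {α : E} (hα : α ∈ D.Φ0) :
    w.linear.symm α ∈ D.Φ0 := by
  obtain ⟨β, hβ, rfl⟩ := hw.exists_linear_eq hα
  rwa [LinearEquiv.symm_apply_apply]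

lemma one : IsWeylLike D 1 where
  inner_linear _ _ := rfl
  linear_mem _ hα := hα
  inner_apply_zero _ _ := ⟨0, by simp⟩
  exists_W0 := ⟨1, one_mem _, rfl⟩
  apply_sub_mem_span _ := by simp

lemma mul (hw : IsWeylLike D w) (hu : IsWeylLike D u) : IsWeylLike D (w * u) where
  inner_linear x z := (hw.inner_linear _ _).trans (hu.inner_linear x z)
  linear_mem α hα := hw.linear_mem _ (hu.linear_mem α hα)
  inner_apply_zero α hα := by
    obtain ⟨β, hβ, rfl⟩ := hw.exists_linear_eq hα
    obtain ⟨n, hn⟩ := hu.inner_apply_zero β hβ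
    obtain ⟨m, hm⟩ := hw.inner_apply_zero _ (hw.linear_mem β hβ)
    exact ⟨n + m, by
      rw [show (w * u) 0 = w (u 0) from rfl, hw.inner_linear_apply, hn, hm]; push_cast; ring⟩
  exists_W0 := by
    obtain ⟨u₁, hu₁, h₁⟩ := hw.exists_W0
    obtain ⟨u₂, hu₂, h₂⟩ := hu.exists_W0
    exact ⟨u₁ * u₂, mul_mem hu₁ hu₂, by
      ext x; exact (congrArg (u₁.linear ·) (LinearEquiv.congr_fun h₂ x)).trans
        (LinearEquiv.congr_fun h₁ _)⟩
  apply_sub_mem_span x := by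
    rw [show (w * u) x = w (u x) from rfl, ← sub_add_sub_cancel]
    exact add_mem (hw.apply_sub_mem_span _) (hu.apply_sub_mem_span x)

lemma inv (hw : IsWeylLike D w) : IsWeylLike D w⁻¹ where
  inner_linear x z := by
    rw [← hw.inner_linear]
    exact congrArg₂ _ (w.linear.apply_symm_apply x) (w.linear.apply_symm_apply z)
  linear_mem _ hα := hw.linear_symm_mem hα
  inner_apply_zero α hα := by
    have h0 : w⁻¹ 0 = -w.linear.symm (w 0) := by
      refine w.linear.injective ?_
      have h := apply_eq_linear_add w (w⁻¹ 0)
      rw [show w (w⁻¹ 0) = 0 from w.apply_symm_apply 0] at h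
      rw [map_neg, LinearEquiv.apply_symm_apply]
      exact (neg_eq_of_add_eq_zero_left h.symm).symm
    obtain ⟨n, hn⟩ := hw.inner_apply_zero _ (hw.linear_mem α hα)
    exact ⟨-n, by rw [h0, inner_neg_right, hw.inner_linear_symm, hn]; push_cast; ring⟩
  exists_W0 := by
    obtain ⟨u₁, hu₁, h₁⟩ := hw.exists_W0
    exact ⟨u₁⁻¹, inv_mem hu₁, by rw [AffineEquiv.inv_def, AffineEquiv.inv_def,
      AffineEquiv.linear_symm, AffineEquiv.linear_symm, h₁]⟩
  apply_sub_mem_span x := by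
    have h := hw.apply_sub_mem_span (w⁻¹ x)
    rw [show w (w⁻¹ x) = x from w.apply_symm_apply x] at h
    rw [← neg_sub]
    exact neg_mem h

lemma of_aRefl {α : E} (hα : α ∈ D.Φ0) : IsWeylLike D (aRefl α 0) := by
  have h := inner_self_ne_zero_of_mem hα
  have h0 : aRefl α 0 0 = 0 := by simp [aRefl_apply h, aval]
  have happ : ∀ x, aRefl α 0 x = (aRefl α 0).linear x := fun x => by
    rw [apply_eq_linear_add _ x, h0, add_zero]
  refine ⟨inner_lrefl_lrefl h, fun β hβ => ?_, fun _ _ => ⟨0, by simp [h0]⟩,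
    ⟨_, Subgroup.subset_closure ⟨α, hα, rfl⟩, rfl⟩, fun x => ?_⟩
  · rw [← happ]
    exact D.root_refl_mem α hα β hβ
  · rw [aRefl_apply h, sub_sub_cancel_left, cv, smul_smul, ← neg_smul]
    exact Submodule.smul_mem _ _ (Submodule.subset_span hα)

lemma of_tr {μ : E} (hμ : μ ∈ D.Qv) : IsWeylLike D (tr μ) where
  inner_linear _ _ := rfl
  linear_mem _ hα := hα
  inner_apply_zero _ hα := by
    rw [tr_apply, zero_add]
    exact exists_inner_eq_intCast_of_mem_Qv hμ hα
  exists_W0 := ⟨1, one_mem _, rfl⟩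
  apply_sub_mem_span x := by
    rw [tr_apply, add_sub_cancel_left]
    exact Qv_le_span hμ

lemma of_mem_W (hw : w ∈ D.W) : IsWeylLike D w := by
  induction hw using Subgroup.closure_induction with
  | mem x hx =>
    rcases hx with ⟨α, hα, rfl⟩ | ⟨μ, hμ, rfl⟩
    exacts [of_aRefl hα, of_tr hμ]
  | one => exact one
  | mul x z _ _ hx hz => exact hx.mul hz
  | inv x _ hx => exact hx.inv

end IsWeylLike

end WeylGroup

section AffineRoots

lemma wact_mul {w : E ≃ᵃ[ℝ] E} (hw : IsWeylLike D w) (u : E ≃ᵃ[ℝ] E) (a : E × ℝ) :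
    wact (w * u) a = wact w (wact u a) := by
  refine Prod.ext rfl ?_
  change a.2 - ⟪w.linear (u.linear a.1), w (u 0)⟫_ℝ = _
  rw [hw.inner_linear_apply]
  simp only [wact]
  ring

lemma wact_add (w : E ≃ᵃ[ℝ] E) (a b : E × ℝ) : wact w (a + b) = wact w a + wact w b := by
  refine Prod.ext (map_add _ _ _) ?_
  simp only [wact, Prod.fst_add, Prod.snd_add, map_add, inner_add_left]
  ring

lemma wact_smul (w : E ≃ᵃ[ℝ] E) (c : ℝ) (a : E × ℝ) : wact w (c • a) = c • wact w a := by
  refine Prod.ext (map_smul _ _ _) ?_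
  simp only [wact, Prod.smul_fst, Prod.smul_snd, map_smul, real_inner_smul_left, smul_eq_mul]
  ring

lemma wact_neg (w : E ≃ᵃ[ℝ] E) (a : E × ℝ) : wact w (-a) = -wact w a := by
  simpa using wact_smul w (-1) a

lemma wact_aRefl {α : E} (h : ⟪α, α⟫_ℝ ≠ 0) (n : ℝ) (b : E × ℝ) :
    wact (aRefl α n) b = b - ⟪cv α, b.1⟫_ℝ • (α, n) := by
  refine Prod.ext (aRefl_linear_apply h n b.1) ?_
  change b.2 - ⟪(aRefl α n).linear b.1, aRefl α n 0⟫_ℝ = _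
  simp only [aRefl_linear_apply h, aRefl_apply h, aval, cv, inner_sub_left, inner_sub_right,
    real_inner_smul_left, real_inner_smul_right, inner_zero_right, Prod.snd_sub, Prod.smul_snd,
    smul_eq_mul, real_inner_comm b.1 α]
  field_simp
  ring

lemma Data.IsAffRoot.neg {a : E × ℝ} (ha : D.IsAffRoot a) : D.IsAffRoot (-a) := by
  obtain ⟨hα, n, hn⟩ := ha
  exact ⟨D.root_neg_mem _ hα, -n, by simp [hn]⟩

lemma Data.IsAffRoot.wact {w : E ≃ᵃ[ℝ] E} (hw : IsWeylLike D w) {a : E × ℝ} (ha : D.IsAffRoot a) :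
    D.IsAffRoot (wact w a) := by
  obtain ⟨hα, n, hn⟩ := ha
  obtain ⟨m, hm⟩ := hw.inner_apply_zero _ (hw.linear_mem _ hα)
  exact ⟨hw.linear_mem _ hα, n - m, by simp only [SSV.wact, hn, hm]; push_cast; ring⟩

lemma Data.IsPosAff.snd_nonneg {a : E × ℝ} (h : D.IsPosAff a) : 0 ≤ a.2 := by
  rcases h.2 with h | ⟨h, -⟩ <;> linarith

lemma isPosAff_or_isPosAff_neg {a : E × ℝ} (ha : D.IsAffRoot a) :
    D.IsPosAff a ∨ D.IsPosAff (-a) := by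
  rcases lt_trichotomy a.2 0 with h | h | h
  · exact Or.inr ⟨ha.neg, Or.inl (by simpa using h)⟩
  · rcases D.pos_dichotomy a.1 ha.1 with ⟨hp, -⟩ | ⟨-, hp⟩
    · exact Or.inl ⟨ha, Or.inr ⟨h, hp⟩⟩
    · exact Or.inr ⟨ha.neg, Or.inr ⟨by simp [h], hp⟩⟩
  · exact Or.inl ⟨ha, Or.inl h⟩

lemma not_isPosAff_neg {a : E × ℝ} (h : D.IsPosAff a) : ¬D.IsPosAff (-a) := by
  rintro ⟨-, h' | ⟨h', hneg⟩⟩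
  · have := h.snd_nonneg
    simp only [Prod.snd_neg] at h'
    linarith
  · rcases h.2 with h₀ | ⟨-, hpos⟩
    · simp only [Prod.snd_neg] at h'
      linarith
    · rcases D.pos_dichotomy a.1 h.1.1 with ⟨-, hn⟩ | ⟨hn, -⟩
      exacts [hn hneg, hn hpos]

lemma not_isPosAff_iff {a : E × ℝ} (ha : D.IsAffRoot a) : ¬D.IsPosAff a ↔ D.IsPosAff (-a) :=
  ⟨(isPosAff_or_isPosAff_neg ha).resolve_left, fun h h' => not_isPosAff_neg h' h⟩

variable (D) in
/-- The convex cone generated by the positive affine roots; the affine roots in it are exactly the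
positive ones. -/
def Data.posCone : Set (E × ℝ) :=
  {a | 0 < a.2 ∨ a.2 = 0 ∧ ∃ n : Fin D.r → ℝ, 0 ≤ n ∧ a.1 = ∑ i, n i • D.simple i}

lemma snd_nonneg_of_mem_posCone {a : E × ℝ} (ha : a ∈ D.posCone) : 0 ≤ a.2 := by
  rcases ha with h | ⟨h, -⟩ <;> linarith

lemma add_mem_posCone {a b : E × ℝ} (ha : a ∈ D.posCone) (hb : b ∈ D.posCone) :
    a + b ∈ D.posCone := by
  have h₁ := snd_nonneg_of_mem_posCone ha
  have h₂ := snd_nonneg_of_mem_posCone hb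
  rcases ha with ha | ⟨ha, n, hn, hna⟩
  · exact Or.inl (by simp only [Prod.snd_add]; linarith)
  rcases hb with hb | ⟨hb, m, hm, hmb⟩
  · exact Or.inl (by simp only [Prod.snd_add]; linarith)
  refine Or.inr ⟨by simp [ha, hb], n + m, add_nonneg hn hm, ?_⟩
  simp only [Prod.fst_add, hna, hmb, Pi.add_apply, add_smul, Finset.sum_add_distrib]

lemma smul_mem_posCone {c : ℝ} (hc : 0 ≤ c) {a : E × ℝ} (ha : a ∈ D.posCone) :
    c • a ∈ D.posCone := by
  rcases hc.eq_or_lt with rfl | hc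
  · exact Or.inr ⟨by simp, 0, le_rfl, by simp⟩
  rcases ha with ha | ⟨ha, n, hn, hna⟩
  · exact Or.inl (by simpa using mul_pos hc ha)
  refine Or.inr ⟨by simp [ha], c • n, smul_nonneg hc.le hn, ?_⟩
  simp only [Prod.smul_fst, hna, Finset.smul_sum, Pi.smul_apply, smul_smul, smul_eq_mul]

lemma Data.IsPosAff.mem_posCone {a : E × ℝ} (h : D.IsPosAff a) : a ∈ D.posCone := by
  rcases h.2 with h | ⟨h, hpos⟩
  · exact Or.inl h
  obtain ⟨n, hn⟩ := D.pos_nat_comb _ hpos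
  exact Or.inr ⟨h, fun i => n i, fun i => Nat.cast_nonneg _, hn⟩

lemma Data.IsAffRoot.isPosAff_of_mem_posCone {a : E × ℝ} (ha : D.IsAffRoot a)
    (hcone : a ∈ D.posCone) : D.IsPosAff a := by
  rcases hcone with h | ⟨h, n, hn, hna⟩
  · exact ⟨ha, Or.inl h⟩
  refine ⟨ha, Or.inr ⟨h, ?_⟩⟩
  by_contra hnot
  have hneg : -a.1 ∈ D.pos := (D.pos_dichotomy a.1 ha.1).resolve_left (by tauto) |>.2
  obtain ⟨m, hm⟩ := D.pos_nat_comb _ hneg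
  have hsum : ∑ i, (n i + m i) • D.simple i = 0 := by
    simp only [add_smul, Finset.sum_add_distrib, ← hna, ← hm, add_neg_cancel]
  have hm0 : ∀ i, (m i : ℝ) = 0 := fun i => by
    have := Fintype.linearIndependent_iff.mp D.simple_indep _ hsum i
    linarith [show (0 : ℝ) ≤ n i from hn i, (Nat.cast_nonneg (m i) : (0 : ℝ) ≤ m i)]
  refine D.root_ne_zero _ (D.pos_subset hneg) ?_
  simp [hm, hm0]

end AffineRoots

lemma finite_setOf_add_intCast_mem_Icc (x a b : ℝ) :
    {t : ℝ | (∃ n : ℤ, t = x + n) ∧ t ∈ Set.Icc a b}.Finite := by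
  refine ((Set.finite_Icc ⌈a - x⌉ ⌊b - x⌋).image fun n : ℤ => x + n).subset ?_
  rintro _ ⟨⟨n, rfl⟩, h₁, h₂⟩
  exact ⟨n, ⟨Int.ceil_le.2 (by linarith), Int.le_floor.2 (by linarith)⟩, rfl⟩

section Exchange

variable {w : E ≃ᵃ[ℝ] E} {a b : E × ℝ}

lemma PiSet_finite (hw : IsWeylLike D w) : (D.PiSet w).Finite := by
  set B := ∑ β ∈ D.Φ0, |⟪β, w 0⟫_ℝ|
  refine ((D.Φ0.finite_toSet).prod (finite_setOf_add_intCast_mem_Icc 0 0 B)).subset ?_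
  rintro a ⟨hpos, hneg⟩
  obtain ⟨n, hn⟩ := hpos.1.2
  have hle : a.2 - ⟪w.linear a.1, w 0⟫_ℝ ≤ 0 := by
    by_contra! h
    exact hneg ⟨hpos.1.wact hw, Or.inl h⟩
  have hB : ⟪w.linear a.1, w 0⟫_ℝ ≤ B :=
    (le_abs_self _).trans (Finset.single_le_sum (fun β _ => abs_nonneg ⟪β, w 0⟫_ℝ)
      (hw.linear_mem _ hpos.1.1))
  exact ⟨hpos.1.1, ⟨n, by rw [hn, zero_add]⟩, hpos.snd_nonneg, by linarith⟩

lemma wact_aRefl_of_isAffRoot (ha : D.IsAffRoot a) (b : E × ℝ) :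
    wact (aRefl a.1 a.2) b = b - ⟪cv a.1, b.1⟫_ℝ • a :=
  wact_aRefl (inner_self_ne_zero_of_mem ha.1) a.2 b

lemma wact_aRefl_self (ha : D.IsAffRoot a) : wact (aRefl a.1 a.2) a = -a := by
  rw [wact_aRefl_of_isAffRoot ha, inner_cv_self (inner_self_ne_zero_of_mem ha.1)]
  module

lemma wact_aRefl_wact_aRefl (ha : D.IsAffRoot a) (b : E × ℝ) :
    wact (aRefl a.1 a.2) (wact (aRefl a.1 a.2) b) = b := by
  rw [wact_aRefl_of_isAffRoot ha, wact_aRefl_of_isAffRoot ha, Prod.fst_sub, Prod.smul_fst,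
    inner_sub_right, real_inner_smul_right, inner_cv_self (inner_self_ne_zero_of_mem ha.1)]
  module

lemma inner_cv_pos_of_mem_PiSet_aRefl (ha : D.IsPosAff a)
    (hb : b ∈ D.PiSet (aRefl a.1 a.2)) : 0 < ⟪cv a.1, b.1⟫_ℝ := by
  by_contra! h
  refine hb.2 ((hb.1.1.wact (IsWeylLike.of_mem_W ha.1.aRefl_mem_W)).isPosAff_of_mem_posCone ?_)
  rw [wact_aRefl_of_isAffRoot ha.1, sub_eq_add_neg, ← neg_smul]
  exact add_mem_posCone hb.1.mem_posCone (smul_mem_posCone (neg_nonneg.2 h) ha.mem_posCone)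

lemma not_mem_PiSet_mul_aRefl (hw : IsWeylLike D w) (ha : a ∈ D.PiSet w) :
    a ∉ D.PiSet (w * aRefl a.1 a.2) := by
  rintro ⟨-, h⟩
  rw [wact_mul hw, wact_aRefl_self ha.1.1, wact_neg] at h
  exact h ((not_isPosAff_iff (ha.1.1.wact hw)).1 ha.2)

lemma wact_aRefl_mem_PiSet (hw : IsWeylLike D w) (ha : a ∈ D.PiSet w)
    (hb : b ∈ D.PiSet (w * aRefl a.1 a.2)) (hpos : D.IsPosAff (wact (aRefl a.1 a.2) b)) :
    wact (aRefl a.1 a.2) b ∈ D.PiSet w \ {a} := by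
  refine ⟨⟨hpos, by rw [← wact_mul hw]; exact hb.2⟩, fun h => ?_⟩
  have hba : b = -a := by
    rw [← wact_aRefl_wact_aRefl ha.1.1 b, Set.mem_singleton_iff.1 h, wact_aRefl_self ha.1.1]
  exact not_isPosAff_neg ha.1 (hba ▸ hb.1)

/-- If `w b` were positive, then so would be `w a = ⟪a∨, b⟫⁻¹ • (w b + w (-s_a b))`, as
`⟪a∨, b⟫ > 0` and `w (-s_a b) = -(w s_a) b` is positive. -/
lemma mem_PiSet_of_not_isPosAff_wact_aRefl (hw : IsWeylLike D w) (ha : a ∈ D.PiSet w)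
    (hb : b ∈ D.PiSet (w * aRefl a.1 a.2)) (hneg : ¬D.IsPosAff (wact (aRefl a.1 a.2) b)) :
    b ∈ D.PiSet w \ {a} := by
  refine ⟨⟨hb.1, fun hwb => ha.2 ?_⟩, fun h => not_mem_PiSet_mul_aRefl hw ha (h ▸ hb)⟩
  have hp := inner_cv_pos_of_mem_PiSet_aRefl ha.1 ⟨hb.1, hneg⟩
  have hwtb : D.IsPosAff (wact w (-wact (aRefl a.1 a.2) b)) := by
    rw [wact_neg, ← wact_mul hw]
    exact (not_isPosAff_iff (hb.1.1.wact (hw.mul (IsWeylLike.of_mem_W ha.1.1.aRefl_mem_W)))).1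
      hb.2
  have hsum : wact w a = (⟪cv a.1, b.1⟫_ℝ)⁻¹ •
      (wact w b + wact w (-wact (aRefl a.1 a.2) b)) := by
    rw [← wact_add, wact_aRefl_of_isAffRoot ha.1.1, show b + -(b - ⟪cv a.1, b.1⟫_ℝ • a) =
      ⟪cv a.1, b.1⟫_ℝ • a by abel, wact_smul, smul_smul, inv_mul_cancel₀ hp.ne', one_smul]
  refine (ha.1.1.wact hw).isPosAff_of_mem_posCone ?_
  rw [hsum]
  exact smul_mem_posCone (inv_nonneg.2 hp.le) (add_mem_posCone hwb.mem_posCone hwtb.mem_posCone)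

/-- The map `b ↦ s_a b` (when positive, else `b`) injects `Π(w s_a)` into `Π(w) \ {a}`. -/
lemma len_mul_aRefl_lt (hw : w ∈ D.W) (ha : a ∈ D.PiSet w) :
    D.len (w * aRefl a.1 a.2) < D.len w := by
  have hw' := IsWeylLike.of_mem_W hw
  set t := aRefl a.1 a.2
  have htt := wact_aRefl_wact_aRefl ha.1.1
  let f : E × ℝ → E × ℝ := fun b => if D.IsPosAff (wact t b) then wact t b else b
  have hmaps : ∀ b ∈ D.PiSet (w * t), f b ∈ D.PiSet w \ {a} := fun b hb => by
    by_cases h : D.IsPosAff (wact t b)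
    · simpa only [f, if_pos h] using wact_aRefl_mem_PiSet hw' ha hb h
    · simpa only [f, if_neg h] using mem_PiSet_of_not_isPosAff_wact_aRefl hw' ha hb h
  have hinj : Set.InjOn f (D.PiSet (w * t)) := by
    intro b₁ hb₁ b₂ hb₂ heq
    by_cases h₁ : D.IsPosAff (wact t b₁) <;> by_cases h₂ : D.IsPosAff (wact t b₂) <;>
      simp only [f, h₁, h₂, if_true, if_false] at heq
    · rw [← htt b₁, heq, htt]
    · exact (h₂ (by rw [← heq, htt]; exact hb₁.1)).elim
    · exact (h₁ (by rw [heq, htt]; exact hb₂.1)).elim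
    · exact heq
  have hfin := PiSet_finite hw'
  calc D.len (w * t) ≤ (D.PiSet w \ {a}).ncard :=
        Set.ncard_le_ncard_of_injOn f hmaps hinj hfin.sdiff
    _ < D.len w := Set.ncard_sdiff_singleton_lt_of_mem ha hfin

end Exchange

section Alcove

lemma aval_asimple_zero (x : E) : aval (D.asimple 0) x = 1 - ⟪D.hroot, x⟫_ℝ := by
  simp only [aval, Data.asimple, Fin.cases_zero, inner_neg_left]
  ring

lemma aval_asimple_succ (i : Fin D.r) (x : E) : aval (D.asimple i.succ) x = ⟪D.simple i, x⟫_ℝ := by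
  simp [aval, Data.asimple]

lemma isAffRoot_asimple (j : Fin (D.r + 1)) : D.IsAffRoot (D.asimple j) := by
  induction j using Fin.cases with
  | zero => exact ⟨D.root_neg_mem _ (D.pos_subset D.hroot_mem_pos), 1, by simp [Data.asimple]⟩
  | succ i => exact ⟨by simpa [Data.asimple] using D.pos_subset (D.simple_mem_pos i), 0,
      by simp [Data.asimple]⟩

lemma inner_sum_smul_simple (n : Fin D.r → ℝ) (x : E) :
    ⟪∑ i, n i • D.simple i, x⟫_ℝ = ∑ i, n i * ⟪D.simple i, x⟫_ℝ := by
  simp only [sum_inner, real_inner_smul_left]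

lemma mem_Cp_of_aval_pos {c : E} (hc : ∀ j, 0 < aval (D.asimple j) c) : c ∈ D.Cp := by
  have hsimple : ∀ i, 0 < ⟪D.simple i, c⟫_ℝ := fun i => aval_asimple_succ i c ▸ hc i.succ
  have hnonneg : ∀ n : Fin D.r → ℕ, 0 ≤ ⟪∑ i, (n i : ℝ) • D.simple i, c⟫_ℝ := fun n => by
    rw [inner_sum_smul_simple]
    exact Finset.sum_nonneg fun i _ => mul_nonneg (Nat.cast_nonneg _) (hsimple i).le
  intro α hα
  obtain ⟨n, hn⟩ := D.pos_nat_comb α hα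
  obtain ⟨m, hm⟩ := D.hroot_highest α (D.pos_subset hα)
  have hφ : ⟪D.hroot, c⟫_ℝ < 1 := by linarith [aval_asimple_zero (D := D) c ▸ hc 0]
  have hle : 0 ≤ ⟪D.hroot, c⟫_ℝ - ⟪α, c⟫_ℝ := by
    rw [← inner_sub_left, hm]
    exact hnonneg m
  refine ⟨?_, by linarith⟩
  obtain ⟨i, hi⟩ : ∃ i, n i ≠ 0 := by
    by_contra! h
    exact D.root_ne_zero α (D.pos_subset hα) (by simp [hn, h])
  rw [hn, inner_sum_smul_simple]
  exact Finset.sum_pos' (fun i _ => mul_nonneg (Nat.cast_nonneg _) (hsimple i).le)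
    ⟨i, Finset.mem_univ _, mul_pos (Nat.cast_pos.2 (Nat.pos_of_ne_zero hi)) (hsimple i)⟩

/-- `c` is the limit of the points `c + t • (z - c)`, `0 < t < 1`, which lie in `C₊`. -/
lemma mem_Cbar_of_aval_nonneg {z c : E} (hz : ∀ j, 0 < aval (D.asimple j) z)
    (hc : ∀ j, 0 ≤ aval (D.asimple j) c) : c ∈ D.Cbar := by
  have hlim : Filter.Tendsto (fun t : ℝ => c + t • (z - c)) (nhdsWithin 0 (Set.Ioi 0)) (nhds c) :=
    ((continuous_const.add (continuous_id.smul continuous_const)).tendsto' 0 c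
      (by simp)).mono_left nhdsWithin_le_nhds
  refine mem_closure_of_tendsto hlim (Filter.mem_of_superset (Ioo_mem_nhdsGT one_pos) ?_)
  rintro t ⟨ht₀, ht₁⟩
  refine mem_Cp_of_aval_pos fun j => ?_
  have hval : aval (D.asimple j) (c + t • (z - c)) =
      (1 - t) * aval (D.asimple j) c + t * aval (D.asimple j) z := by
    simp only [aval, inner_add_right, real_inner_smul_right, inner_sub_right]
    ring
  rw [hval]
  nlinarith [hc j, hz j]

variable (D) in
lemma exists_inner_simple_eq_one : ∃ z : E, ∀ i, ⟪D.simple i, z⟫_ℝ = 1 := by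
  let V := Submodule.span ℝ (Set.range D.simple)
  have : FiniteDimensional ℝ V := FiniteDimensional.span_of_finite ℝ (Set.finite_range _)
  let b : Module.Basis (Fin D.r) ℝ V := Module.Basis.span D.simple_indep
  let z : V := (InnerProductSpace.toDual ℝ V).symm
    (LinearMap.toContinuousLinearMap (b.constr ℝ fun _ => (1 : ℝ)))
  refine ⟨z, fun i => ?_⟩
  have h : ⟪z, b i⟫_ℝ = 1 :=
    InnerProductSpace.toDual_symm_apply.trans (b.constr_basis ℝ _ i)
  rw [real_inner_comm, ← h, Submodule.coe_inner, Module.Basis.span_apply]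

variable (D) in
lemma exists_aval_asimple_pos : ∃ z : E, ∀ j, 0 < aval (D.asimple j) z := by
  obtain ⟨z, hz⟩ := exists_inner_simple_eq_one D
  obtain ⟨n, hn⟩ := D.pos_nat_comb D.hroot D.hroot_mem_pos
  have hT : 0 ≤ ⟪D.hroot, z⟫_ℝ := by
    rw [hn, inner_sum_smul_simple]
    exact Finset.sum_nonneg fun i _ => by rw [hz i, mul_one]; exact Nat.cast_nonneg _
  refine ⟨(⟪D.hroot, z⟫_ℝ + 1)⁻¹ • z, fun j => ?_⟩
  induction j using Fin.cases with
  | zero =>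
    rw [aval_asimple_zero, real_inner_smul_right, sub_pos, inv_mul_lt_one₀ (by linarith)]
    linarith
  | succ i =>
    rw [aval_asimple_succ, real_inner_smul_right, hz i, mul_one]
    positivity

lemma dist_aRefl_lt {α : E} (hα : α ≠ 0) {n : ℝ} {p z : E}
    (h : aval (α, n) p * aval (α, n) z < 0) : dist (aRefl α n p) z < dist p z := by
  have hpos : 0 < ⟪α, α⟫_ℝ := real_inner_self_pos.2 hα
  refine lt_of_pow_lt_pow_left₀ 2 dist_nonneg ?_
  rw [dist_eq_norm, dist_eq_norm, norm_aRefl_sub_sq hpos.ne']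
  nlinarith [div_pos four_pos hpos]

end Alcove

section FundamentalDomain

lemma eq_of_sub_mem_span_of_forall_inner_eq {S : Set E} {x x' : E}
    (hx : x - x' ∈ Submodule.span ℝ S) (h : ∀ s ∈ S, ⟪s, x⟫_ℝ = ⟪s, x'⟫_ℝ) : x = x' := by
  have horth : ∀ u ∈ Submodule.span ℝ S, ⟪u, x - x'⟫_ℝ = 0 := fun u hu => by
    induction hu using Submodule.span_induction with
    | mem s hs => rw [inner_sub_right, h s hs, sub_self]
    | zero => exact inner_zero_left _
    | add u v _ _ hu hv => rw [inner_add_left, hu, hv, add_zero]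
    | smul c u _ hu => rw [real_inner_smul_left, hu, mul_zero]
  exact sub_eq_zero.1 (inner_self_eq_zero.1 (horth _ hx))

lemma exists_inner_apply_eq {w : E ≃ᵃ[ℝ] E} (hw : IsWeylLike D w) {α : E} (hα : α ∈ D.Φ0)
    (y : E) : ∃ β ∈ D.Φ0, ∃ m : ℤ, ⟪α, w y⟫_ℝ = ⟪β, y⟫_ℝ + m := by
  obtain ⟨β, hβ, rfl⟩ := hw.exists_linear_eq hα
  obtain ⟨m, hm⟩ := hw.inner_apply_zero _ hα
  exact ⟨β, hβ, m, by rw [hw.inner_linear_apply, hm]⟩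

/-- A point of the orbit is determined by its root values (the orbit lies in `y + span Φ0`), and
near `z` these values lie in the discrete sets `β(y) + ℤ`. -/
lemma Orb_inter_closedBall_finite (y z : E) (R : ℝ) :
    (D.Orb y ∩ Metric.closedBall z R).Finite := by
  let Ψ : E → D.Φ0 → ℝ := fun p α => ⟪(α : E), p⟫_ℝ
  let bound : D.Φ0 → ℝ := fun α => ‖(α : E)‖ * (‖z‖ + R)
  have hfin : (Set.univ.pi fun α => ⋃ β ∈ (D.Φ0 : Set E),
      {t : ℝ | (∃ n : ℤ, t = ⟪β, y⟫_ℝ + n) ∧ t ∈ Set.Icc (-bound α) (bound α)}).Finite :=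
    Set.Finite.pi fun α => D.Φ0.finite_toSet.biUnion fun β _ =>
      finite_setOf_add_intCast_mem_Icc _ _ _
  refine Set.Finite.of_finite_image (f := Ψ) (hfin.subset ?_) ?_
  · rintro _ ⟨p, ⟨⟨w, hw, rfl⟩, hp⟩, rfl⟩ α -
    obtain ⟨β, hβ, m, hm⟩ := exists_inner_apply_eq (IsWeylLike.of_mem_W hw) α.2 y
    have hnorm : ‖w y‖ ≤ ‖z‖ + R := by
      have := norm_le_norm_add_norm_sub' (w y) z
      rw [Metric.mem_closedBall, dist_eq_norm] at hp
      linarith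
    have hbound : |⟪(α : E), w y⟫_ℝ| ≤ bound α :=
      (abs_real_inner_le_norm _ _).trans (mul_le_mul_of_nonneg_left hnorm (norm_nonneg _))
    exact Set.mem_biUnion hβ ⟨⟨m, hm⟩, abs_le.1 hbound⟩
  · rintro _ ⟨⟨w₁, hw₁, rfl⟩, -⟩ _ ⟨⟨w₂, hw₂, rfl⟩, -⟩ h
    refine eq_of_sub_mem_span_of_forall_inner_eq ?_ fun α hα => congrFun h ⟨α, hα⟩
    rw [← sub_sub_sub_cancel_right _ _ y]
    exact sub_mem ((IsWeylLike.of_mem_W hw₁).apply_sub_mem_span y)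
      ((IsWeylLike.of_mem_W hw₂).apply_sub_mem_span y)

/-- A point of the orbit closest to a point `z` of `C₊` lies in `C̄₊`: reflecting in a wall
separating it from `z` would bring it closer. -/
lemma exists_mem_Cbar_apply_eq (y : E) : ∃ c ∈ D.Cbar, ∃ w ∈ D.W, w c = y := by
  obtain ⟨z, hz⟩ := exists_aval_asimple_pos D
  set K := D.Orb y ∩ Metric.closedBall z (dist y z)
  have hyK : y ∈ K := ⟨⟨1, one_mem _, rfl⟩, Metric.mem_closedBall.2 le_rfl⟩
  obtain ⟨p, ⟨hpO, hpz⟩, hmin⟩ :=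
    Set.exists_min_image K (dist · z) (Orb_inter_closedBall_finite y z _) ⟨y, hyK⟩
  have hp : ∀ j, 0 ≤ aval (D.asimple j) p := fun j => by
    by_contra! hj
    have ha := isAffRoot_asimple j
    have hlt : dist (aRefl (D.asimple j).1 (D.asimple j).2 p) z < dist p z :=
      dist_aRefl_lt (D.root_ne_zero _ ha.1) (mul_neg_of_neg_of_pos hj (hz j))
    have hle := hmin _ ⟨apply_mem_Orb ha.aRefl_mem_W hpO,
      (Metric.mem_closedBall.1 hpz).trans' hlt.le⟩
    linarith
  obtain ⟨u, hu, rfl⟩ := hpO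
  exact ⟨u y, mem_Cbar_of_aval_nonneg hz hp, u⁻¹, inv_mem hu, u.symm_apply_apply y⟩

variable (D) in
lemma exists_apply_cpt_eq (y : E) : ∃ w ∈ D.W, w (D.cpt y) = y := by
  have h := exists_mem_Cbar_apply_eq (D := D) y
  rw [Data.cpt, dif_pos h]
  exact h.choose_spec.2

variable (D) in
lemma wmin_spec (y : E) :
    (D.wmin y ∈ D.W ∧ D.wmin y (D.cpt y) = y) ∧
      ∀ u ∈ D.W, u (D.cpt y) = y → D.len (D.wmin y) ≤ D.len u := by
  have hex : ∃ w, (w ∈ D.W ∧ w (D.cpt y) = y) ∧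
      ∀ u, u ∈ D.W → u (D.cpt y) = y → D.len w ≤ D.len u := by
    obtain ⟨w, ⟨hw, hmin⟩⟩ := exists_minimalFor_of_wellFoundedLT
      (fun u => u ∈ D.W ∧ u (D.cpt y) = y) D.len (exists_apply_cpt_eq D y)
    exact ⟨w, hw, fun u hu huy => (le_total (D.len w) (D.len u)).elim id (hmin ⟨hu, huy⟩)⟩
  rw [Data.wmin, dif_pos hex]
  exact hex.choose_spec

end FundamentalDomain

section MinimalRepresentative

lemma isPosAff_wact_wmin (y : E) {a : E × ℝ} (ha : D.IsPosAff a)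
    (h0 : aval a (D.cpt y) = 0) : D.IsPosAff (wact (D.wmin y) a) := by
  obtain ⟨⟨hwW, hwc⟩, hmin⟩ := wmin_spec D y
  by_contra hneg
  have hfix : aRefl a.1 a.2 (D.cpt y) = D.cpt y := by
    rw [aRefl_apply (inner_self_ne_zero_of_mem ha.1.1), Prod.mk.eta, h0, zero_smul, sub_zero]
  have hle := hmin _ (mul_mem hwW ha.1.aRefl_mem_W)
    (by rw [AffineEquiv.coe_mul, Function.comp_apply, hfix, hwc])
  exact (len_mul_aRefl_lt hwW ⟨ha, hneg⟩).not_ge hle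

lemma isPosAff_wact_wmin_iff (y : E) {a : E × ℝ} (ha : D.IsAffRoot a)
    (h0 : aval a (D.cpt y) = 0) : D.IsPosAff (wact (D.wmin y) a) ↔ D.IsPosAff a := by
  refine ⟨fun h => by_contra fun hneg => ?_, fun h => isPosAff_wact_wmin y h h0⟩
  refine not_isPosAff_neg h ?_
  rw [← wact_neg]
  refine isPosAff_wact_wmin y ((not_isPosAff_iff ha).1 hneg) ?_
  simp only [aval, Prod.fst_neg, Prod.snd_neg, inner_neg_left] at h0 ⊢
  linarith

end MinimalRepresentative

section Eta

lemma neg_not_mem_pos {α : E} (hα : α ∈ D.pos) : -α ∉ D.pos :=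
  ((D.pos_dichotomy α (D.pos_subset hα)).resolve_right fun h => h.1 hα).2

lemma isPosAff_neg_iff {α : E} (hα : α ∈ D.pos) {t : ℝ} (ht : ∃ n : ℤ, t = n) :
    D.IsPosAff (-α, t) ↔ 0 < t :=
  ⟨fun h => h.2.resolve_right fun h => neg_not_mem_pos hα h.2,
    fun h => ⟨⟨D.root_neg_mem α (D.pos_subset hα), ht⟩, Or.inl h⟩⟩

variable (D) in
/-- `η(γ(z))` for roots `γ` of either sign, normalised to be odd in `γ`: when `γ(z) ∈ ℤ` it is
`1` or `-1` according as the affine root `(-γ, γ(z))`, which vanishes at `z`, is positive or not. -/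
def Data.etaRoot (γ z : E) : ℤ :=
  if ∃ n : ℤ, ⟪γ, z⟫_ℝ = n then (if D.IsPosAff (-γ, ⟪γ, z⟫_ℝ) then 1 else -1) else 0

lemma etaRoot_of_mem_pos {α : E} (hα : α ∈ D.pos) (z : E) :
    D.etaRoot α z = eta ⟪α, z⟫_ℝ := by
  by_cases ht : ∃ n : ℤ, ⟪α, z⟫_ℝ = n
  · simp only [Data.etaRoot, eta, if_pos ht, isPosAff_neg_iff hα ht]
  · simp only [Data.etaRoot, eta, if_neg ht]

lemma etaRoot_neg {γ : E} (hγ : γ ∈ D.Φ0) (z : E) : D.etaRoot (-γ) z = -D.etaRoot γ z := by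
  by_cases ht : ∃ n : ℤ, ⟪γ, z⟫_ℝ = n
  · have ht' : ∃ n : ℤ, ⟪-γ, z⟫_ℝ = n := by
      obtain ⟨n, hn⟩ := ht
      exact ⟨-n, by rw [inner_neg_left, hn, Int.cast_neg]⟩
    have hsign : D.IsPosAff (-(-γ), ⟪-γ, z⟫_ℝ) ↔ ¬D.IsPosAff (-γ, ⟪γ, z⟫_ℝ) := by
      rw [not_isPosAff_iff ⟨D.root_neg_mem γ hγ, ht⟩, inner_neg_left, Prod.neg_mk]
    simp only [Data.etaRoot, if_pos ht, if_pos ht', hsign]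
    split_ifs <;> rfl
  · have ht' : ¬∃ n : ℤ, ⟪-γ, z⟫_ℝ = n := fun ⟨n, hn⟩ =>
      ht ⟨-n, by rw [Int.cast_neg, ← hn, inner_neg_left, neg_neg]⟩
    simp only [Data.etaRoot, if_neg ht, if_neg ht', neg_zero]

lemma etaRoot_wmin_linear (y : E) {β : E} (hβ : β ∈ D.Φ0) :
    D.etaRoot ((D.wmin y).linear β) y = D.etaRoot β (D.cpt y) := by
  obtain ⟨⟨hwW, hwc⟩, -⟩ := wmin_spec D y
  have hw := IsWeylLike.of_mem_W hwW
  obtain ⟨m, hm⟩ := hw.inner_apply_zero _ (hw.linear_mem β hβ)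
  have hval : ⟪(D.wmin y).linear β, y⟫_ℝ = ⟪β, D.cpt y⟫_ℝ + m := by
    have h := hw.inner_linear_apply β (D.cpt y)
    rwa [hwc, hm] at h
  have hint : (∃ n : ℤ, ⟪(D.wmin y).linear β, y⟫_ℝ = n) ↔ ∃ n : ℤ, ⟪β, D.cpt y⟫_ℝ = n := by
    rw [hval]
    exact ⟨fun ⟨n, hn⟩ => ⟨n - m, by push_cast; linarith⟩,
      fun ⟨n, hn⟩ => ⟨n + m, by push_cast; linarith⟩⟩
  by_cases ht : ∃ n : ℤ, ⟪β, D.cpt y⟫_ℝ = n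
  · have hwact : wact (D.wmin y) (-β, ⟪β, D.cpt y⟫_ℝ) =
        (-(D.wmin y).linear β, ⟪(D.wmin y).linear β, y⟫_ℝ) := by
      refine Prod.ext (map_neg _ _) ?_
      simp only [wact, map_neg, inner_neg_left, hval, hm, sub_neg_eq_add]
    have hsign := isPosAff_wact_wmin_iff y (a := (-β, ⟪β, D.cpt y⟫_ℝ))
      ⟨D.root_neg_mem β hβ, ht⟩ (by simp [aval])
    rw [hwact] at hsign
    simp only [Data.etaRoot, if_pos ht, if_pos (hint.2 ht), hsign]
  · simp only [Data.etaRoot, if_neg ht, if_neg (mt hint.1 ht)]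

end Eta

section Reindexing

lemma IsWeylLike.apply_linear_of_W0_invariant {X : Type*} {k : E → X}
    (hk : ∀ α ∈ D.Φ0, ∀ w ∈ D.W0, k (w.linear α) = k α) {w : E ≃ᵃ[ℝ] E} (hw : IsWeylLike D w)
    {β : E} (hβ : β ∈ D.Φ0) : k (w.linear β) = k β := by
  obtain ⟨u, hu, hlin⟩ := hw.exists_W0
  rw [← hlin, hk β hβ u hu]

lemma apply_neg_of_W0_invariant {X : Type*} {k : E → X}
    (hk : ∀ α ∈ D.Φ0, ∀ w ∈ D.W0, k (w.linear α) = k α) {α : E} (hα : α ∈ D.Φ0) :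
    k (-α) = k α := by
  have h := (IsWeylLike.of_aRefl hα).apply_linear_of_W0_invariant hk hα
  rwa [aRefl_linear_apply (inner_self_ne_zero_of_mem hα),
    inner_cv_self (inner_self_ne_zero_of_mem hα), two_smul, sub_add_cancel_left] at h

variable (D) in
def Data.toPos (γ : E) : E := if γ ∈ D.pos then γ else -γ

lemma toPos_mem_pos {γ : E} (hγ : γ ∈ D.Φ0) : D.toPos γ ∈ D.pos := by
  unfold Data.toPos
  split_ifs with h
  exacts [h, ((D.pos_dichotomy γ hγ).resolve_left fun h' => h h'.1).2]

lemma toPos_eq_or (γ : E) : D.toPos γ = γ ∨ D.toPos γ = -γ := by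
  unfold Data.toPos
  split_ifs <;> simp

lemma toPos_eq_of_eq_or {α γ : E} (hα : α ∈ D.pos) (h : γ = α ∨ γ = -α) : D.toPos γ = α := by
  rcases h with rfl | rfl
  · exact if_pos hα
  · rw [Data.toPos, if_neg (neg_not_mem_pos hα), neg_neg]

lemma prod_pos_comp_eq {M : Type*} [CommMonoid M] {v : E ≃ₗ[ℝ] E}
    (hv : ∀ α ∈ D.Φ0, v α ∈ D.Φ0) (hv' : ∀ α ∈ D.Φ0, v.symm α ∈ D.Φ0) {f : E → M}
    (hf : ∀ α ∈ D.Φ0, f (-α) = f α) : ∏ α ∈ D.pos, f (v α) = ∏ α ∈ D.pos, f α := by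
  refine Finset.prod_nbij' (fun β => D.toPos (v β)) (fun α => D.toPos (v.symm α))
    (fun β hβ => toPos_mem_pos (hv β (D.pos_subset hβ)))
    (fun α hα => toPos_mem_pos (hv' α (D.pos_subset hα))) (fun β hβ => ?_) (fun α hα => ?_)
    (fun β hβ => ?_)
  · refine toPos_eq_of_eq_or hβ ?_
    rcases toPos_eq_or (D := D) (v β) with h | h <;> simp [h]
  · refine toPos_eq_of_eq_or hα ?_
    rcases toPos_eq_or (D := D) (v.symm α) with h | h <;> simp [h]
  · rcases toPos_eq_or (D := D) (v β) with h | h <;> simp only [h, hf _ (hv β (D.pos_subset hβ))]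

end Reindexing

end SSV

theorem statement18_general
    {E : Type*} [NormedAddCommGroup E] [InnerProductSpace ℝ E]
    (D : SSV.Data E) {F : Type*} [Field F] (k : E → Fˣ)
    (hk : ∀ α ∈ D.Φ0, ∀ w ∈ D.W0, k (w.linear α) = k α)
    (Λ : AddSubgroup E)
    (hint : ∀ α ∈ D.Φ0, ∀ lam ∈ Λ, ∃ n : ℤ, ⟪α, lam⟫_ℝ = (n : ℝ))
    (y : E) :
    ∀ lam ∈ Λ, SSV.sweight D k y lam =
      SSV.sweight D k (D.cpt y) ((D.wmin y).linear.symm lam) := by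
  intro lam hlam
  have hw := SSV.IsWeylLike.of_mem_W (SSV.wmin_spec D y).1.1
  let f : E → Fˣ := fun γ => k γ ^ (D.etaRoot γ y * ⌊⟪γ, lam⟫_ℝ⌋)
  have hf : ∀ γ ∈ D.Φ0, f (-γ) = f γ := fun γ hγ => by
    obtain ⟨n, hn⟩ := hint γ hγ lam hlam
    simp only [f, SSV.apply_neg_of_W0_invariant hk hγ, SSV.etaRoot_neg hγ, inner_neg_left, hn,
      ← Int.cast_neg, Int.floor_intCast, neg_mul_neg]
  calc SSV.sweight D k y lam = ∏ α ∈ D.pos, f α :=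
        Finset.prod_congr rfl fun α hα => by simp only [f, SSV.etaRoot_of_mem_pos hα]
    _ = ∏ β ∈ D.pos, f ((D.wmin y).linear β) :=
        (SSV.prod_pos_comp_eq hw.linear_mem (fun _ => hw.linear_symm_mem) hf).symm
    _ = SSV.sweight D k (D.cpt y) ((D.wmin y).linear.symm lam) :=
        Finset.prod_congr rfl fun β hβ => by
          simp only [f, hw.apply_linear_of_W0_invariant hk (D.pos_subset hβ),
            SSV.etaRoot_wmin_linear y (D.pos_subset hβ), SSV.etaRoot_of_mem_pos hβ,
            hw.inner_linear_symm]

/-- for every `y ∈ E`, `𝔰_y = (Dw_y)·𝔰_{c_y}` in `T_Λ`, i.e.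
`𝔰_y(λ) = 𝔰_{c_y}((Dw_y)⁻¹λ)` for all `λ ∈ Λ`. -/
theorem statement18
    {E : Type*} [NormedAddCommGroup E] [InnerProductSpace ℝ E] [FiniteDimensional ℝ E]
    (D : SSV.Data E) {F : Type*} [Field F] (k : E → Fˣ)
    (hk : ∀ α ∈ D.Φ0, ∀ w ∈ D.W0, k (w.linear α) = k α)
    (Λ : AddSubgroup E) (hΛfg : Λ.FG) (hQΛ : D.Qv ≤ Λ)
    (hint : ∀ α ∈ D.Φ0, ∀ lam ∈ Λ, ∃ n : ℤ, ⟪α, lam⟫_ℝ = (n : ℝ))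
    (y : E) :
    ∀ lam ∈ Λ, SSV.sweight D k y lam =
      SSV.sweight D k (D.cpt y) ((D.wmin y).linear.symm lam) :=
  statement18_general D k hk Λ hint y
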